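/- Let L₀, …, L_{m−1} : ℝⁿ → ℝ each have ρ-Lipschitz Hessians, let vᵢ(θ) = β(∇L̄(θ) − ∇Lᵢ(θ)) where L̄ = (1/m)∑ᵢ Lᵢ, and suppose ‖∇L̄(θ) − ∇Lᵢ(θ)‖ ≤ G for all i. Then ‖ (1/m)∑ᵢ ∇Lᵢ(θ − vᵢ(θ)) − [∇L̄(θ) + (β/(2m)) ∇(∑ᵢ ‖∇Lᵢ(θ) − ∇L̄(θ)‖²)] ‖ ≤ (ρ/2) β² G². -/

import Mathlib

/-!
Write `dᵢ = ∇Lᵢ(θ) - ∇L̄(θ)`, so that the displaced point is `θ + β dᵢ` and `∑ dᵢ = 0`.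
The Hessians `Hᵢ` are symmetric, hence the gradient of the regulariser `∑ ‖dᵢ‖²` at `θ` is
`2 ∑ (Hᵢ - H̄) dᵢ = 2 ∑ Hᵢ dᵢ`. The quantity to bound is therefore the average of the first-order
Taylor remainders `∇Lᵢ(θ + β dᵢ) - ∇Lᵢ(θ) - β Hᵢ dᵢ`, each of norm at most `(ρ/2) ‖β dᵢ‖²` because
`∇Lᵢ` has a `ρ`-Lipschitz derivative.
-/

open InnerProductSpace Finset
open scoped RealInnerProductSpace

section Taylor

variable {E F : Type*} [NormedAddCommGroup E] [NormedSpace ℝ E]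
  [NormedAddCommGroup F] [NormedSpace ℝ F]

theorem norm_image_add_sub_sub_fderiv_le {f : E → F} {ρ : ℝ} (hf : Differentiable ℝ f)
    (hlip : ∀ a b, ‖fderiv ℝ f a - fderiv ℝ f b‖ ≤ ρ * ‖a - b‖) (x v : E) :
    ‖f (x + v) - f x - fderiv ℝ f x v‖ ≤ ρ / 2 * ‖v‖ ^ 2 := by
  set φ : ℝ → F := fun t => f (x + t • v) - f x - t • fderiv ℝ f x v
  have hφ : ∀ t, HasDerivAt φ (fderiv ℝ f (x + t • v) v - fderiv ℝ f x v) t := by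
    intro t
    have hline : HasDerivAt (fun t : ℝ => x + t • v) v t := by
      simpa using ((hasDerivAt_id t).smul_const v).const_add x
    have hscale : HasDerivAt (fun t : ℝ => t • fderiv ℝ f x v) (fderiv ℝ f x v) t := by
      simpa using (hasDerivAt_id t).smul_const (fderiv ℝ f x v)
    exact (((hf _).hasFDerivAt.comp_hasDerivAt t hline).sub_const (f x)).fun_sub hscale
  have hB : ∀ t, HasDerivAt (fun t : ℝ => ρ / 2 * ‖v‖ ^ 2 * t ^ 2) (ρ * ‖v‖ ^ 2 * t) t := fun t =>
    ((hasDerivAt_pow 2 t).const_mul _).congr_deriv (by norm_num; ring)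
  have hbound : ∀ t ∈ Set.Ico (0 : ℝ) 1,
      ‖fderiv ℝ f (x + t • v) v - fderiv ℝ f x v‖ ≤ ρ * ‖v‖ ^ 2 * t := by
    rintro t ⟨ht, -⟩
    calc ‖fderiv ℝ f (x + t • v) v - fderiv ℝ f x v‖
        ≤ ‖fderiv ℝ f (x + t • v) - fderiv ℝ f x‖ * ‖v‖ :=
          (fderiv ℝ f (x + t • v) - fderiv ℝ f x).le_opNorm v
      _ ≤ ρ * ‖t • v‖ * ‖v‖ := by
          gcongr
          simpa using hlip (x + t • v) x
      _ = ρ * ‖v‖ ^ 2 * t := by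
          rw [norm_smul, Real.norm_of_nonneg ht]
          ring
  have hφ₁ : ‖φ 1‖ ≤ ρ / 2 * ‖v‖ ^ 2 * 1 ^ 2 :=
    image_norm_le_of_norm_deriv_right_le_deriv_boundary
      (fun t _ => (hφ t).continuousAt.continuousWithinAt) (fun t _ => (hφ t).hasDerivWithinAt)
      (by simp [φ]) hB hbound (Set.right_mem_Icc.2 zero_le_one)
  simpa [φ] using hφ₁

end Taylor

section Gradient

variable {E : Type*} [NormedAddCommGroup E] [InnerProductSpace ℝ E] [CompleteSpace E]

theorem HasGradientAt.fun_sum {ι : Type*} {s : Finset ι} {f : ι → E → ℝ} {f' : ι → E} {x : E}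
    (hf : ∀ i ∈ s, HasGradientAt (f i) (f' i) x) :
    HasGradientAt (fun y => ∑ i ∈ s, f i y) (∑ i ∈ s, f' i) x := by
  rw [hasGradientAt_iff_hasFDerivAt, map_sum]
  exact HasFDerivAt.fun_sum fun i hi => (hf i hi).hasFDerivAt

theorem HasGradientAt.const_mul {f : E → ℝ} {f' x : E} (hf : HasGradientAt f f' x) (c : ℝ) :
    HasGradientAt (fun y => c * f y) (c • f') x := by
  rw [hasGradientAt_iff_hasFDerivAt, map_smulₛₗ, starRingEnd_apply, star_trivial]
  exact hf.hasFDerivAt.const_mul c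

theorem ContDiffAt.differentiableAt_gradient {f : E → ℝ} {x : E} (hf : ContDiffAt ℝ 2 f x) :
    DifferentiableAt ℝ (gradient f) x :=
  ((toDual ℝ E).symm.contDiff.contDiffAt.comp x
    (hf.fderiv_right (m := 1) (by norm_num))).differentiableAt one_ne_zero

theorem inner_fderiv_gradient_apply {f : E → ℝ} {x : E} (hf : ContDiffAt ℝ 2 f x) (u w : E) :
    ⟪fderiv ℝ (gradient f) x u, w⟫ = fderiv ℝ (fderiv ℝ f) x u w := by
  have hDf : ContDiffAt ℝ 1 (fderiv ℝ f) x := hf.fderiv_right (by norm_num)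
  have h₁ := (innerSL ℝ w).hasFDerivAt.comp x hf.differentiableAt_gradient.hasFDerivAt
  have h₂ : HasFDerivAt (fun y => fderiv ℝ f y w)
      ((ContinuousLinearMap.apply ℝ ℝ w).comp (fderiv ℝ (fderiv ℝ f) x)) x :=
    (ContinuousLinearMap.apply ℝ ℝ w).hasFDerivAt.comp x
      (hDf.differentiableAt one_ne_zero).hasFDerivAt
  have hfun : innerSL ℝ w ∘ gradient f = fun y => fderiv ℝ f y w := by
    funext y
    simp
  rw [hfun] at h₁
  simpa [real_inner_comm] using congr($(h₁.unique h₂) u)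

theorem isSymmetric_fderiv_gradient {f : E → ℝ} {x : E} (hf : ContDiffAt ℝ 2 f x) :
    (fderiv ℝ (gradient f) x : E →ₗ[ℝ] E).IsSymmetric := fun u w => by
  change ⟪fderiv ℝ (gradient f) x u, w⟫ = ⟪u, fderiv ℝ (gradient f) x w⟫
  rw [real_inner_comm _ u,
    inner_fderiv_gradient_apply hf, inner_fderiv_gradient_apply hf,
    (hf.isSymmSndFDerivAt (by simp)).eq]

theorem HasFDerivAt.hasGradientAt_norm_sq {g : E → E} {A : E →L[ℝ] E} {x : E}
    (hg : HasFDerivAt g A x) (hA : (A : E →ₗ[ℝ] E).IsSymmetric) :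
    HasGradientAt (fun y => ‖g y‖ ^ 2) (2 • A (g x)) x := by
  rw [hasGradientAt_iff_hasFDerivAt]
  refine hg.norm_sq.congr_fderiv ?_
  ext u
  simpa using (hA (g x) u).symm

theorem sum_sub_smul_sum_eq_zero {ι M : Type*} [Fintype ι] [AddCommGroup M] [Module ℝ M]
    {c : ℝ} (hc : (Fintype.card ι : ℝ) * c = 1) (v : ι → M) :
    ∑ i, (v i - c • ∑ j, v j) = 0 := by
  rw [sum_sub_distrib, sum_const, card_univ, ← Nat.cast_smul_eq_nsmul ℝ, smul_smul, hc,
    one_smul, sub_self]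

theorem HasGradientAt.sum_norm_sq_sub_smul_sum {ι : Type*} [Fintype ι] {g : ι → E → E}
    {H : ι → E →L[ℝ] E} {x : E} {c : ℝ} (hc : (Fintype.card ι : ℝ) * c = 1)
    (hg : ∀ i, HasFDerivAt (g i) (H i) x) (hH : ∀ i, (H i : E →ₗ[ℝ] E).IsSymmetric) :
    HasGradientAt (fun y => ∑ i, ‖g i y - c • ∑ j, g j y‖ ^ 2)
      (2 • ∑ i, H i (g i x - c • ∑ j, g j x)) x := by
  have hmean : (c • ∑ j, (H j : E →ₗ[ℝ] E)).IsSymmetric :=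
    (LinearMap.isSymmetric_sum univ fun j _ => hH j).smul (conj_trivial c)
  have hdev : ∀ i, HasGradientAt (fun y => ‖g i y - c • ∑ j, g j y‖ ^ 2)
      (2 • (H i - c • ∑ j, H j) (g i x - c • ∑ j, g j x)) x := fun i =>
    ((hg i).sub ((HasFDerivAt.fun_sum fun j _ => hg j).const_smul c)).hasGradientAt_norm_sq
      (by simpa using (hH i).sub hmean)
  convert HasGradientAt.fun_sum fun i (_ : i ∈ univ) => hdev i using 1
  simp only [sub_apply, smul_sub, sum_sub_distrib, ← smul_sum, ← map_sum,
    sum_sub_smul_sum_eq_zero hc, map_zero, smul_zero, sub_zero]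

end Gradient

theorem norm_smul_sum_le_of_norm_le {ι F : Type*} [Fintype ι] [SeminormedAddCommGroup F]
    [NormedSpace ℝ F] {c B : ℝ} (hc : (Fintype.card ι : ℝ) * c = 1) {r : ι → F}
    (hr : ∀ i, ‖r i‖ ≤ B) : ‖c • ∑ i, r i‖ ≤ B := by
  have hc₀ : 0 ≤ c := (pos_of_mul_pos_right (hc ▸ one_pos) (Nat.cast_nonneg _)).le
  calc ‖c • ∑ i, r i‖ ≤ c * ∑ i, ‖r i‖ := by
        rw [norm_smul, Real.norm_of_nonneg hc₀]
        exact mul_le_mul_of_nonneg_left (norm_sum_le _ _) hc₀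
    _ ≤ c * (Fintype.card ι * B) := by
        gcongr
        simpa using sum_le_sum fun i (_ : i ∈ univ) => hr i
    _ = B := by rw [← mul_assoc, mul_comm c, hc, one_mul]

theorem igr_remainder_bound_general
    (n m : ℕ) (hm : 1 ≤ m) (β ρ G : ℝ) (hρ : 0 < ρ)
    (L : Fin m → EuclideanSpace ℝ (Fin n) → ℝ)
    (hL : ∀ i, ContDiff ℝ 2 (L i))
    (hHess : ∀ i, ∀ θ₁ θ₂ : EuclideanSpace ℝ (Fin n),
      ‖fderiv ℝ (gradient (L i)) θ₁ - fderiv ℝ (gradient (L i)) θ₂‖ ≤ ρ * ‖θ₁ - θ₂‖)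
    (θ : EuclideanSpace ℝ (Fin n))
    (hGbound : ∀ i : Fin m,
      ‖gradient (fun θ => (1 / (m : ℝ)) * ∑ j : Fin m, L j θ) θ - gradient (L i) θ‖ ≤ G) :
    ‖(1 / (m : ℝ)) • ∑ i : Fin m,
        gradient (L i)
          (θ - β • (gradient (fun θ => (1 / (m : ℝ)) * ∑ j : Fin m, L j θ) θ
                      - gradient (L i) θ))
      - (gradient (fun θ => (1 / (m : ℝ)) * ∑ j : Fin m, L j θ) θ
          + (β / (2 * (m : ℝ))) • gradient
              (fun θ => ∑ i : Fin m,
                ‖gradient (L i) θ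
                  - gradient (fun θ => (1 / (m : ℝ)) * ∑ j : Fin m, L j θ) θ‖ ^ 2)
              θ)‖
      ≤ (ρ / 2) * β ^ 2 * G ^ 2 := by
  have hc : (Fintype.card (Fin m) : ℝ) * (1 / m) = 1 := by
    rw [Fintype.card_fin, mul_one_div_cancel (by positivity)]
  have hmean : ∀ x, gradient (fun x => (1 / (m : ℝ)) * ∑ j, L j x) x
      = (1 / (m : ℝ)) • ∑ j, gradient (L j) x := fun x =>
    ((HasGradientAt.fun_sum fun j _ =>
      ((hL j).differentiable two_ne_zero x).hasGradientAt).const_mul _).gradient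
  have hgrad : ∀ i, Differentiable ℝ (gradient (L i)) := fun i x =>
    (hL i).contDiffAt.differentiableAt_gradient
  simp only [hmean] at hGbound ⊢
  set d := fun i => gradient (L i) θ - (1 / (m : ℝ)) • ∑ j, gradient (L j) θ
  rw [(HasGradientAt.sum_norm_sq_sub_smul_sum hc (fun i => (hgrad i θ).hasFDerivAt)
    fun i => isSymmetric_fderiv_gradient (hL i).contDiffAt).gradient]
  have hdisplaced : ∀ i, θ - β • ((1 / (m : ℝ)) • ∑ j, gradient (L j) θ - gradient (L i) θ)
      = θ + β • d i := fun i => by simp only [d]; module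
  simp only [hdisplaced]
  calc _ = ‖(1 / (m : ℝ)) • ∑ i, (gradient (L i) (θ + β • d i) - gradient (L i) θ
        - fderiv ℝ (gradient (L i)) θ (β • d i))‖ := by
        congr 1
        simp only [d, map_smul, sum_sub_distrib, ← smul_sum]
        module
    _ ≤ ρ / 2 * β ^ 2 * G ^ 2 := norm_smul_sum_le_of_norm_le hc fun i => ?_
  have hd : ‖d i‖ ≤ G := by simpa only [d, norm_sub_rev] using hGbound i
  calc _ ≤ ρ / 2 * ‖β • d i‖ ^ 2 := norm_image_add_sub_sub_fderiv_le (hgrad i) (hHess i) θ _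
    _ ≤ ρ / 2 * β ^ 2 * G ^ 2 := by
        rw [norm_smul, mul_pow, Real.norm_eq_abs, sq_abs, mul_assoc]
        gcongr

/-- Quantified `O(β²)` remainder for the implicit-gradient-regularization update: if each `Lᵢ`
has `ρ`-Lipschitz Hessian and the gradient deviations at `θ` are bounded by `G`, then the
averaged displaced gradient differs from the IGR first-order expression by at most `(ρ/2)β²G²`. -/
theorem igr_remainder_bound
    (n m : ℕ) (hm : 1 ≤ m) (β ρ G : ℝ) (hρ : 0 < ρ) (hG : 0 < G)
    (L : Fin m → EuclideanSpace ℝ (Fin n) → ℝ)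
    (hL : ∀ i, ContDiff ℝ 2 (L i))
    (hHess : ∀ i, ∀ θ₁ θ₂ : EuclideanSpace ℝ (Fin n),
      ‖fderiv ℝ (gradient (L i)) θ₁ - fderiv ℝ (gradient (L i)) θ₂‖ ≤ ρ * ‖θ₁ - θ₂‖)
    (θ : EuclideanSpace ℝ (Fin n))
    (hGbound : ∀ i : Fin m,
      ‖gradient (fun θ => (1 / (m : ℝ)) * ∑ j : Fin m, L j θ) θ - gradient (L i) θ‖ ≤ G) :
    ‖(1 / (m : ℝ)) • ∑ i : Fin m,
        gradient (L i)
          (θ - β • (gradient (fun θ => (1 / (m : ℝ)) * ∑ j : Fin m, L j θ) θ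
                      - gradient (L i) θ))
      - (gradient (fun θ => (1 / (m : ℝ)) * ∑ j : Fin m, L j θ) θ
          + (β / (2 * (m : ℝ))) • gradient
              (fun θ => ∑ i : Fin m,
                ‖gradient (L i) θ
                  - gradient (fun θ => (1 / (m : ℝ)) * ∑ j : Fin m, L j θ) θ‖ ^ 2)
              θ)‖
      ≤ (ρ / 2) * β ^ 2 * G ^ 2 :=
  igr_remainder_bound_general n m hm β ρ G hρ L hL hHess θ hGbound
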